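/- arXiv:2511.20057 — 7 statements merged into one kernel-verified Lean document; each statement's English description precedes it below -/
import Mathlib

section
/- Let S, T be F_q-subspaces of F_{q^n}, U = S × T, and ξ ∈ F_{q^n}. If ξ ∈ a₁⁻¹S ∩ ... ∩ a_i⁻¹S for some F_q-linearly independent a₁,...,a_i ∈ T, then dim_{F_q}(U ∩ ⟨(ξ,1)⟩_{F_{q^n}}) ≥ i. -/
/-- If `ξ ∈ a₁⁻¹S ∩ ... ∩ a_i⁻¹S` for `F_q`-linearly independent `a₁,...,a_i ∈ T`, then
`dim_{F_q}((S × T) ∩ ⟨(ξ,1)⟩_{F_{q^n}}) ≥ i`. -/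
theorem stmt_2 (Fq Fqn : Type*) [Field Fq] [Fintype Fq] [Field Fqn]
    [Algebra Fq Fqn] [FiniteDimensional Fq Fqn]
    (S T : Submodule Fq Fqn) (i : ℕ) (a : Fin i → Fqn)
    (haT : ∀ j, a j ∈ T) (hli : LinearIndependent Fq a)
    (ξ : Fqn) (hξ : ∀ j, ξ ∈ S.map (LinearMap.mulLeft Fq (a j)⁻¹)) :
    i ≤ Module.finrank Fq
      ↥((S.prod T) ⊓ (Submodule.span Fqn {(ξ, (1 : Fqn))}).restrictScalars Fq) := by
  set W := (S.prod T) ⊓ (Submodule.span Fqn {(ξ, (1 : Fqn))}).restrictScalars Fq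
  have hmem : ∀ j, (a j * ξ, a j) ∈ W := by
    intro j
    constructor
    · constructor
      · obtain ⟨s, hs, hsx⟩ := hξ j
        rcases eq_or_ne (a j) 0 with h0 | h0
        · simp [h0]
        · have : a j * ξ = s := by
            rw [← hsx]; simp [LinearMap.mulLeft_apply]
            field_simp
          simpa [this] using hs
      · exact haT j
    · show (a j * ξ, a j) ∈ Submodule.span Fqn {(ξ, (1 : Fqn))}
      have : (a j * ξ, a j) = (a j) • (ξ, (1 : Fqn)) := by simp [Prod.smul_def]
      rw [this]
      exact Submodule.smul_mem _ _ (Submodule.mem_span_singleton_self _)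
  set b : Fin i → W := fun j => ⟨(a j * ξ, a j), hmem j⟩
  have hbli : LinearIndependent Fq b := by
    have : a = (LinearMap.snd Fq Fqn Fqn ∘ₗ W.subtype) ∘ b := by
      funext j; rfl
    rw [this] at hli
    exact hli.of_comp _
  simpa using hbli.fintype_card_le_finrank
end

section
/- Let S, T be F_q-subspaces of F_{q^n}, U = S × T, ξ ∈ F_{q^n}, and suppose dim_{F_q}(U ∩ ⟨(ξ,1)⟩_{F_{q^n}}) ≥ i. Then there exist F_q-linearly independent elements t₁,...,t_i ∈ T with ξ ∈ t₁⁻¹S ∩ ... ∩ t_i⁻¹S. -/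
/-- If `dim_{F_q}((S × T) ∩ ⟨(ξ,1)⟩_{F_{q^n}}) ≥ i` then there exist `F_q`-linearly independent
`t₁,...,t_i ∈ T` with `ξ ∈ t₁⁻¹S ∩ ... ∩ t_i⁻¹S`. -/
theorem stmt_3 (Fq Fqn : Type*) [Field Fq] [Fintype Fq] [Field Fqn]
    [Algebra Fq Fqn] [FiniteDimensional Fq Fqn]
    (S T : Submodule Fq Fqn) (i : ℕ) (ξ : Fqn)
    (hw : i ≤ Module.finrank Fq
      ↥((S.prod T) ⊓ (Submodule.span Fqn {(ξ, (1 : Fqn))}).restrictScalars Fq)) :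
    ∃ tt : Fin i → Fqn, (∀ j, tt j ∈ T) ∧ LinearIndependent Fq tt ∧
      ∀ j, ξ ∈ S.map (LinearMap.mulLeft Fq (tt j)⁻¹) := by
  classical
  set W := (S.prod T) ⊓ (Submodule.span Fqn {(ξ, (1 : Fqn))}).restrictScalars Fq with hWdef
  have key : ∀ w : W, (w : Fqn × Fqn) = (w : Fqn × Fqn).2 • (ξ, 1) := by
    intro w
    obtain ⟨hw1, hw2⟩ := w.2
    obtain ⟨a, ha⟩ := Submodule.mem_span_singleton.mp hw2
    have h2 : (w : Fqn × Fqn).2 = a := by rw [← ha]; simp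
    rw [h2, ← ha]
  let g : W →ₗ[Fq] Fqn := (LinearMap.snd Fq Fqn Fqn).comp W.subtype
  have hg : Function.Injective g := by
    intro x y hxy
    have hx : (x : Fqn × Fqn) = (y : Fqn × Fqn) := by
      rw [key x, key y]
      have : (x : Fqn × Fqn).2 = (y : Fqn × Fqn).2 := hxy
      rw [this]
    exact Subtype.ext hx
  let b := Module.finBasis Fq W
  let tt : Fin i → Fqn := fun j => g (b (Fin.castLE hw j))
  have hli : LinearIndependent Fq tt := by
    have h1 : LinearIndependent Fq (g ∘ b) :=
      b.linearIndependent.map' g (LinearMap.ker_eq_bot.mpr hg)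
    exact h1.comp _ (Fin.castLE_injective hw)
  refine ⟨tt, ?_, hli, ?_⟩
  · intro j
    exact ((b (Fin.castLE hw j)).2.1).2
  · intro j
    set w := b (Fin.castLE hw j) with hwdef
    have hne : tt j ≠ 0 := hli.ne_zero j
    have hfst : (w : Fqn × Fqn).1 = tt j * ξ := by
      have := key w
      have h1 : (w : Fqn × Fqn).1 = (w : Fqn × Fqn).2 * ξ := by
        rw [this]; simp
      simpa [tt, g] using h1
    have hS : (w : Fqn × Fqn).1 ∈ S := (w.2.1).1
    refine ⟨(w : Fqn × Fqn).1, hS, ?_⟩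
    simp only [LinearMap.mulLeft_apply, hfst]
    exact inv_mul_cancel_left₀ hne ξ
end

section
/- Let n = 2t, let f: F_{q^t} → F_{q^t} be an F_q-linear map, fix ξ ∈ F_{q^n} \ F_{q^t}, and set S_{f,ξ} = {u + ξ f(u) : u ∈ F_{q^t}}. Let α₀, α₁ ∈ F_{q^t} with α := (α₀ + ξα₁)⁻¹ defined (α₀ + ξα₁ ≠ 0). If the F_q-linear map ψ(x) = f(α₀x) − α₁x on F_{q^t} is bijective, then dim_{F_q}((S_{f,ξ} × S_{Tr,ξ}) ∩ ⟨(1,α)⟩_{F_{q^n}}) ≤ 1, where Tr = Tr_{q^t/q} is the trace from F_{q^t} to F_q. -/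
/-- If `ψ(x) = f(α₀x) − α₁x` is bijective on `F_{q^t}`, then the point `⟨(1,α)⟩` with
`α = (α₀ + ξα₁)⁻¹` has weight at most `1` in `L_{S_{f,ξ} × S_{Tr,ξ}}`. -/
theorem stmt_5 (Fq Fqt Fqn : Type*) [Field Fq] [Fintype Fq] [Field Fqt] [Field Fqn]
    [Algebra Fq Fqt] [Algebra Fqt Fqn] [Algebra Fq Fqn] [IsScalarTower Fq Fqt Fqn]
    [FiniteDimensional Fq Fqt] [FiniteDimensional Fqt Fqn]
    (t : ℕ) (ht : Module.finrank Fq Fqt = t) (h2 : Module.finrank Fqt Fqn = 2)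
    (ξ : Fqn) (hξ : ξ ∉ Set.range (algebraMap Fqt Fqn))
    (f : Fqt →ₗ[Fq] Fqt)
    (α₀ α₁ : Fqt)
    (hα : algebraMap Fqt Fqn α₀ + ξ * algebraMap Fqt Fqn α₁ ≠ 0)
    (hψ : Function.Bijective fun x : Fqt => f (α₀ * x) - α₁ * x) :
    Module.finrank Fq
      ↥(((Submodule.span Fq
            {y : Fqn | ∃ u : Fqt, y = algebraMap Fqt Fqn u + ξ * algebraMap Fqt Fqn (f u)}).prod
          (Submodule.span Fq
            {y : Fqn | ∃ u : Fqt, y = algebraMap Fqt Fqn u +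
              ξ * algebraMap Fqt Fqn (algebraMap Fq Fqt (Algebra.trace Fq Fqt u))})) ⊓
        (Submodule.span Fqn
          {((1 : Fqn), (algebraMap Fqt Fqn α₀ + ξ * algebraMap Fqt Fqn α₁)⁻¹)}).restrictScalars Fq)
      ≤ 1 := by
  classical
  set j := algebraMap Fqt Fqn with hj
  have hjinj : Function.Injective j := (algebraMap Fqt Fqn).injective
  -- uniqueness of the `{1, ξ}` representation
  have huniq : ∀ a b : Fqt, j a + ξ * j b = 0 → a = 0 ∧ b = 0 := by
    intro a b h
    by_cases hb : b = 0
    · subst hb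
      simp only [map_zero, mul_zero, add_zero] at h
      exact ⟨hjinj (by simpa using h), rfl⟩
    · exfalso
      apply hξ
      refine ⟨-a / b, ?_⟩
      have hjb : j b ≠ 0 := fun h0 => hb (hjinj (by simpa using h0))
      field_simp [hj] at h ⊢
      rw [map_neg, map_div₀, neg_eq_iff_eq_neg, div_eq_iff hjb]
      linear_combination h
  -- `{1, ξ}` spans `Fqn` over `Fqt`, yielding `ξ² = B + A ξ`
  have hli : LinearIndependent Fqt ![(1 : Fqn), ξ] := by
    rw [LinearIndependent.pair_iff]
    intro s u hsu
    have : j s + ξ * j u = 0 := by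
      have h1 : s • (1 : Fqn) = j s := by rw [Algebra.smul_def, mul_one]
      have h2 : u • ξ = j u * ξ := Algebra.smul_def u ξ
      rw [h1, h2] at hsu
      linear_combination hsu
    exact huniq s u this
  have hspan : Submodule.span Fqt (Set.range ![(1 : Fqn), ξ]) = ⊤ :=
    hli.span_eq_top_of_card_eq_finrank (by simp [h2])
  obtain ⟨B, A, hBA⟩ : ∃ B A : Fqt, B • (1 : Fqn) + A • ξ = ξ * ξ := by
    have : (ξ * ξ) ∈ Submodule.span Fqt ({(1 : Fqn), ξ} : Set Fqn) := by
      have : Set.range ![(1 : Fqn), ξ] = {(1 : Fqn), ξ} := by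
        simp only [Matrix.range_cons, Matrix.range_empty, Set.union_empty,
          Set.union_singleton]
        exact Set.pair_comm ξ 1
      rw [this] at hspan
      rw [hspan]; trivial
    exact Submodule.mem_span_pair.mp this
  have hξ2 : ξ * ξ = j B + ξ * j A := by
    rw [← hBA, Algebra.smul_def, Algebra.smul_def]; ring
  -- ψ as a linear map
  have hψlin : ∀ (s : Fq) (v : Fqt),
      f (α₀ * (s • v)) - α₁ * (s • v) = s • (f (α₀ * v) - α₁ * v) := by
    intro s v
    rw [mul_smul_comm, map_smul, mul_smul_comm, smul_sub]
  -- the special vector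
  obtain ⟨v₀, hv₀⟩ := hψ.2 (α₀ + A * α₁ - f (B * α₁))
  set α : Fqn := (j α₀ + ξ * j α₁)⁻¹ with hαdef
  have hαmul : α * (j α₀ + ξ * j α₁) = 1 := inv_mul_cancel₀ hα
  set c₀ : Fqn := (j v₀ + ξ) * (j α₀ + ξ * j α₁) with hc₀
  set p₀ : Fqn × Fqn := (c₀, j v₀ + ξ) with hp₀
  -- the two spans are ranges of linear maps
  set Amap : Fqt →ₗ[Fq] Fqn := (Algebra.linearMap Fqt Fqn).restrictScalars Fq with hAmap
  set Mmap : Fqn →ₗ[Fq] Fqn := LinearMap.mulLeft Fq ξ with hMmap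
  set gf : Fqt →ₗ[Fq] Fqn := Amap + Mmap ∘ₗ (Amap ∘ₗ f) with hgf
  set gT : Fqt →ₗ[Fq] Fqn :=
    Amap + Mmap ∘ₗ (Amap ∘ₗ ((Algebra.linearMap Fq Fqt).comp (Algebra.trace Fq Fqt))) with hgT
  have hgf_apply : ∀ u : Fqt, gf u = j u + ξ * j (f u) := fun u => rfl
  have hgT_apply : ∀ u : Fqt,
      gT u = j u + ξ * j (algebraMap Fq Fqt (Algebra.trace Fq Fqt u)) := fun u => rfl
  have hSf : {y : Fqn | ∃ u : Fqt, y = j u + ξ * j (f u)} = Set.range gf := by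
    ext y; simp only [Set.mem_setOf_eq, Set.mem_range]
    constructor
    · rintro ⟨u, rfl⟩; exact ⟨u, (hgf_apply u).symm⟩
    · rintro ⟨u, rfl⟩; exact ⟨u, hgf_apply u⟩
  have hST : {y : Fqn | ∃ u : Fqt,
      y = j u + ξ * j (algebraMap Fq Fqt (Algebra.trace Fq Fqt u))} = Set.range gT := by
    ext y; simp only [Set.mem_setOf_eq, Set.mem_range]
    constructor
    · rintro ⟨u, rfl⟩; exact ⟨u, (hgT_apply u).symm⟩
    · rintro ⟨u, rfl⟩; exact ⟨u, hgT_apply u⟩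
  -- main claim: the intersection is contained in the span of `p₀`
  have hle : ((Submodule.span Fq
            {y : Fqn | ∃ u : Fqt, y = j u + ξ * j (f u)}).prod
          (Submodule.span Fq
            {y : Fqn | ∃ u : Fqt, y = j u +
              ξ * j (algebraMap Fq Fqt (Algebra.trace Fq Fqt u))})) ⊓
        (Submodule.span Fqn {((1 : Fqn), α)}).restrictScalars Fq ≤
        Submodule.span Fq {p₀} := by
    rintro x ⟨hx1, hx2⟩
    rw [SetLike.mem_coe] at hx1 hx2
    rw [Submodule.restrictScalars_mem, Submodule.mem_span_singleton] at hx2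
    obtain ⟨c, rfl⟩ := hx2
    rw [Submodule.mem_prod] at hx1
    obtain ⟨hc1, hc2⟩ := hx1
    simp only [Prod.smul_mk, smul_eq_mul, mul_one] at hc1 hc2
    rw [hSf, ← LinearMap.coe_range, Submodule.span_eq] at hc1
    rw [hST, ← LinearMap.coe_range, Submodule.span_eq] at hc2
    obtain ⟨u, hu⟩ := hc1
    obtain ⟨v, hv⟩ := hc2
    rw [hgf_apply] at hu
    rw [hgT_apply] at hv
    set s : Fq := Algebra.trace Fq Fqt v with hs
    set s' : Fqt := algebraMap Fq Fqt s with hs'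
    -- c = (c * α) * (j α₀ + ξ * j α₁)
    have hc : c = (c * α) * (j α₀ + ξ * j α₁) := by
      rw [mul_assoc, hαmul, mul_one]
    rw [← hv, ← hu] at hc
    -- expand and compare coefficients
    have hexp : j u + ξ * j (f u) =
        j (v * α₀ + B * (s' * α₁)) + ξ * j (v * α₁ + s' * α₀ + A * (s' * α₁)) := by
      rw [hc]
      simp only [map_add, map_mul]
      linear_combination (j s' * j α₁) * hξ2
    have hdiff : j (u - (v * α₀ + B * (s' * α₁))) +
        ξ * j (f u - (v * α₁ + s' * α₀ + A * (s' * α₁))) = 0 := by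
      simp only [map_sub]
      linear_combination hexp
    obtain ⟨he1, he2⟩ := huniq _ _ hdiff
    rw [sub_eq_zero] at he1 he2
    -- derive ψ v = s • (ψ v₀)
    have hu_eq : u = α₀ * v + s • (B * α₁) := by
      rw [he1, Algebra.smul_def, ← hs']; ring
    have hfu : f u = f (α₀ * v) + s • f (B * α₁) := by
      rw [hu_eq, map_add, map_smul]
    have hψv : f (α₀ * v) - α₁ * v = s • (α₀ + A * α₁ - f (B * α₁)) := by
      have : f (α₀ * v) = v * α₁ + s' * α₀ + A * (s' * α₁) - s • f (B * α₁) := by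
        rw [← he2, hfu]; ring
      rw [this, Algebra.smul_def, Algebra.smul_def, ← hs']
      ring
    have hveq : v = s • v₀ := by
      apply hψ.1
      show f (α₀ * v) - α₁ * v = f (α₀ * (s • v₀)) - α₁ * (s • v₀)
      have hv₀' : f (α₀ * v₀) - α₁ * v₀ = α₀ + A * α₁ - f (B * α₁) := hv₀
      rw [hψlin s v₀, hψv, hv₀']
    -- conclude membership in the span of p₀
    have hsmul1 : c * α = s • (j v₀ + ξ) := by
      rw [← hv, hveq]
      simp only [Algebra.smul_def, map_mul, IsScalarTower.algebraMap_apply Fq Fqt Fqn]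
      ring
    have hsmul2 : c = s • c₀ := by
      rw [hc₀, ← smul_mul_assoc, ← hsmul1, mul_assoc, hαmul, mul_one]
    rw [Submodule.mem_span_singleton]
    refine ⟨s, ?_⟩
    rw [hp₀, Prod.smul_mk, ← hsmul1, ← hsmul2]
    show (c, c * α) = c • ((1 : Fqn), α)
    simp [Prod.ext_iff]
  have hfin : FiniteDimensional Fq Fqn := Module.Finite.trans Fqt Fqn
  calc Module.finrank Fq _ ≤ Module.finrank Fq (Submodule.span Fq {p₀}) :=
        Submodule.finrank_mono hle
    _ ≤ 1 := by
        simpa using finrank_span_le_card ({p₀} : Set (Fqn × Fqn))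
end

section
/- Let n = 2t, f: F_{q^t} → F_{q^t} an F_q-linear map, ξ ∈ F_{q^n} \ F_{q^t} with ξ² = Aξ + B (A, B ∈ F_{q^t}), and α₀, α₁ ∈ F_{q^t} with α₀ + ξα₁ ≠ 0; set α = (α₀ + ξα₁)⁻¹. Then dim_{F_q}((S_{f,ξ} × S_{f,ξ}) ∩ ⟨(1,α)⟩_{F_{q^n}}) equals the F_q-dimension of the kernel of the map G(x) = f(α₀x) + f(α₁B f(x)) − (α₀ + α₁A) f(x) − α₁x on F_{q^t}. -/
/-- With `ξ² = Aξ + B` and `α = (α₀ + ξα₁)⁻¹`, the weight of `⟨(1,α)⟩` in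
`L_{S_{f,ξ} × S_{f,ξ}}` equals the dimension of the kernel of
`G(x) = f(α₀x) + f(α₁B f(x)) − (α₀ + α₁A) f(x) − α₁x` on `F_{q^t}`. -/
theorem stmt_9 (Fq Fqt Fqn : Type*) [Field Fq] [Fintype Fq] [Field Fqt] [Field Fqn]
    [Algebra Fq Fqt] [Algebra Fqt Fqn] [Algebra Fq Fqn] [IsScalarTower Fq Fqt Fqn]
    [FiniteDimensional Fq Fqt] [FiniteDimensional Fqt Fqn]
    (t : ℕ) (ht : Module.finrank Fq Fqt = t) (h2 : Module.finrank Fqt Fqn = 2)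
    (ξ : Fqn) (hξ : ξ ∉ Set.range (algebraMap Fqt Fqn))
    (A B : Fqt) (hξ2 : ξ ^ 2 = algebraMap Fqt Fqn A * ξ + algebraMap Fqt Fqn B)
    (f : Fqt →ₗ[Fq] Fqt)
    (α₀ α₁ : Fqt)
    (hα : algebraMap Fqt Fqn α₀ + ξ * algebraMap Fqt Fqn α₁ ≠ 0)
    (G : Fqt →ₗ[Fq] Fqt)
    (hG : ∀ x, G x = f (α₀ * x) + f (α₁ * B * f x) - (α₀ + α₁ * A) * f x - α₁ * x) :
    Module.finrank Fq
      ↥(((Submodule.span Fq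
            {y : Fqn | ∃ u : Fqt, y = algebraMap Fqt Fqn u + ξ * algebraMap Fqt Fqn (f u)}).prod
          (Submodule.span Fq
            {y : Fqn | ∃ u : Fqt, y = algebraMap Fqt Fqn u + ξ * algebraMap Fqt Fqn (f u)})) ⊓
        (Submodule.span Fqn
          {((1 : Fqn), (algebraMap Fqt Fqn α₀ + ξ * algebraMap Fqt Fqn α₁)⁻¹)}).restrictScalars Fq)
      = Module.finrank Fq ↥(LinearMap.ker G) := by
  classical
  have inj : Function.Injective (algebraMap Fqt Fqn) := (algebraMap Fqt Fqn).injective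
  -- uniqueness of coordinates w.r.t. {1, ξ}
  have huniq : ∀ x y : Fqt,
      algebraMap Fqt Fqn x + ξ * algebraMap Fqt Fqn y = 0 → x = 0 ∧ y = 0 := by
    intro x y h
    by_cases hy : y = 0
    · subst hy
      simp only [map_zero, mul_zero, add_zero] at h
      exact ⟨inj (by simpa using h), rfl⟩
    · exfalso
      apply hξ
      have hay : algebraMap Fqt Fqn y ≠ 0 := fun h0 => hy (inj (by simpa using h0))
      refine ⟨-x / y, ?_⟩
      rw [map_div₀, map_neg, eq_comm, eq_div_iff hay]
      linear_combination h
  -- the Fq-linear parametrization of S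
  let ι : Fqt →ₗ[Fq] Fqn := (IsScalarTower.toAlgHom Fq Fqt Fqn).toLinearMap
  let W : Fqt →ₗ[Fq] Fqn := ι + (LinearMap.mulLeft Fq ξ) ∘ₗ ι ∘ₗ f
  have hW : ∀ u, W u = algebraMap Fqt Fqn u + ξ * algebraMap Fqt Fqn (f u) := fun u => rfl
  have hset : {y : Fqn | ∃ u : Fqt, y = algebraMap Fqt Fqn u + ξ * algebraMap Fqt Fqn (f u)}
      = Set.range W := by
    ext y
    simp only [Set.mem_setOf_eq, Set.mem_range, hW, eq_comm]
  have hS : Submodule.span Fq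
      {y : Fqn | ∃ u : Fqt, y = algebraMap Fqt Fqn u + ξ * algebraMap Fqt Fqn (f u)}
      = LinearMap.range W := by
    rw [hset, ← LinearMap.coe_range, Submodule.span_eq]
  set β : Fqn := algebraMap Fqt Fqn α₀ + ξ * algebraMap Fqt Fqn α₁ with hβ
  -- the key multiplication identity
  have hmul : ∀ v : Fqt, β * W v =
      algebraMap Fqt Fqn (α₀ * v + α₁ * B * f v)
        + ξ * algebraMap Fqt Fqn (α₁ * v + (α₀ + α₁ * A) * f v) := by
    intro v
    simp only [hW, hβ, map_add, map_mul]
    linear_combination (algebraMap Fqt Fqn α₁ * algebraMap Fqt Fqn (f v)) * hξ2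
  -- the comparison map
  let Φ : Fqt →ₗ[Fq] Fqn × Fqn := ((LinearMap.mulLeft Fq β) ∘ₗ W).prod W
  have hΦ : ∀ v, Φ v = (β * W v, W v) := fun v => rfl
  let Ψ : (LinearMap.ker G) →ₗ[Fq] Fqn × Fqn := Φ ∘ₗ (LinearMap.ker G).subtype
  have hinj : Function.Injective Ψ := by
    rw [← LinearMap.ker_eq_bot]
    rw [LinearMap.ker_eq_bot']
    intro ⟨v, hv⟩ h0
    have h2' : W v = 0 := congrArg Prod.snd h0
    rw [hW] at h2'
    ext
    exact (huniq v (f v) h2').1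
  have hrange : LinearMap.range Ψ =
      ((Submodule.span Fq
            {y : Fqn | ∃ u : Fqt, y = algebraMap Fqt Fqn u + ξ * algebraMap Fqt Fqn (f u)}).prod
          (Submodule.span Fq
            {y : Fqn | ∃ u : Fqt, y = algebraMap Fqt Fqn u + ξ * algebraMap Fqt Fqn (f u)})) ⊓
        (Submodule.span Fqn {((1 : Fqn), β⁻¹)}).restrictScalars Fq := by
    ext x
    constructor
    · rintro ⟨⟨v, hv⟩, rfl⟩
      have hGv : G v = 0 := hv
      rw [hG] at hGv
      have hfu : f (α₀ * v + α₁ * B * f v) = α₁ * v + (α₀ + α₁ * A) * f v := by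
        have := map_add f (α₀ * v) (α₁ * B * f v)
        rw [this]
        linear_combination hGv
      constructor
      · constructor
        · show (Ψ ⟨v, hv⟩).1 ∈ _
          rw [hS]
          refine ⟨α₀ * v + α₁ * B * f v, ?_⟩
          show W _ = (Φ v).1
          rw [hΦ, hmul v, hW, hfu]
        · show (Ψ ⟨v, hv⟩).2 ∈ _
          rw [hS]
          exact ⟨v, rfl⟩
      · show Ψ ⟨v, hv⟩ ∈ Submodule.span Fqn {((1 : Fqn), β⁻¹)}
        rw [Submodule.mem_span_singleton]
        refine ⟨β * W v, ?_⟩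
        show (β * W v) • ((1 : Fqn), β⁻¹) = Φ v
        rw [hΦ, Prod.smul_mk, smul_eq_mul, smul_eq_mul, mul_one]
        congr 1
        rw [mul_assoc, mul_comm (W v), ← mul_assoc, mul_inv_cancel₀ hα, one_mul]
    · rintro ⟨⟨hp, hq⟩, hline⟩
      have hline' : x ∈ Submodule.span Fqn {((1 : Fqn), β⁻¹)} := hline
      rw [Submodule.mem_span_singleton] at hline'
      obtain ⟨c, hc⟩ := hline'
      rw [hS] at hp hq
      obtain ⟨u, hu⟩ := hp
      obtain ⟨v, hv⟩ := hq
      have hx1 : x.1 = c := by rw [← hc]; simp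
      have hx2 : x.2 = c * β⁻¹ := by rw [← hc]; simp [smul_eq_mul]
      have hcW : c = β * W v := by
        rw [hv, hx2, mul_comm β, mul_assoc, inv_mul_cancel₀ hα, mul_one]
      have key : W u = β * W v := by rw [hu, hx1, hcW]
      rw [hmul v, hW] at key
      have hz : algebraMap Fqt Fqn (u - (α₀ * v + α₁ * B * f v))
          + ξ * algebraMap Fqt Fqn (f u - (α₁ * v + (α₀ + α₁ * A) * f v)) = 0 := by
        rw [map_sub, map_sub]
        linear_combination key
      obtain ⟨e1, e2⟩ := huniq _ _ hz
      have hu' : u = α₀ * v + α₁ * B * f v := sub_eq_zero.mp e1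
      have hfu' : f u = α₁ * v + (α₀ + α₁ * A) * f v := sub_eq_zero.mp e2
      have hGv : G v = 0 := by
        rw [hG]
        have : f (α₀ * v) + f (α₁ * B * f v) = f u := by
          rw [hu', map_add]
        rw [this, hfu']
        ring
      refine ⟨⟨v, hGv⟩, ?_⟩
      show Φ v = x
      rw [hΦ]
      have hx1' : β * W v = x.1 := by rw [← hcW, hx1]
      rw [hx1', hv]
  rw [← hrange]
  exact (LinearEquiv.finrank_eq (LinearEquiv.ofInjective Ψ hinj)).symm
end

section
/- Let t ≥ 1 and gcd(s,t) = 1, and let a₀, ..., a_{k-1} ∈ F_{q^t} with the linearized polynomial P(x) = a₀x + a₁x^{q^s} + ... + a_{k-1}x^{q^{s(k-1)}} − x^{q^{sk}} (of q^s-degree k ≤ t) having kernel of F_q-dimension equal to k (i.e., P splits completely over F_{q^t}, having q^k roots). Then N_{q^t/q}(a₀) = (−1)^{t(k+1)}, where N_{q^t/q} is the field norm from F_{q^t} to F_q. -/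
open Finset Module

section prelim
variable {Fq Fqt : Type*} [Field Fq] [Fintype Fq] [Field Fqt] [Fintype Fqt]
  [Algebra Fq Fqt]

lemma pow_qpow_add (m : ℕ) (x y : Fqt) :
    (x + y) ^ (Fintype.card Fq ^ m) = x ^ (Fintype.card Fq ^ m) + y ^ (Fintype.card Fq ^ m) := by
  haveI : CharP Fq (ringChar Fq) := ringChar.charP Fq
  obtain ⟨n, hp, hcard⟩ := FiniteField.card Fq (ringChar Fq)
  haveI : Fact (ringChar Fq).Prime := ⟨hp⟩
  haveI : CharP Fqt (ringChar Fq) :=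
    charP_of_injective_algebraMap (algebraMap Fq Fqt).injective (ringChar Fq)
  rw [hcard, ← pow_mul]
  exact add_pow_char_pow x y (ringChar Fq) (↑n * m)

lemma pow_qpow_sub (m : ℕ) (x y : Fqt) :
    (x - y) ^ (Fintype.card Fq ^ m) = x ^ (Fintype.card Fq ^ m) - y ^ (Fintype.card Fq ^ m) := by
  haveI : CharP Fq (ringChar Fq) := ringChar.charP Fq
  obtain ⟨n, hp, hcard⟩ := FiniteField.card Fq (ringChar Fq)
  haveI : Fact (ringChar Fq).Prime := ⟨hp⟩
  haveI : CharP Fqt (ringChar Fq) :=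
    charP_of_injective_algebraMap (algebraMap Fq Fqt).injective (ringChar Fq)
  rw [hcard, ← pow_mul]
  exact sub_pow_char_pow x y (↑n * m) (p := ringChar Fq)

lemma alg_pow_qpow (m : ℕ) (μ : Fq) :
    (algebraMap Fq Fqt μ) ^ (Fintype.card Fq ^ m) = algebraMap Fq Fqt μ := by
  rw [← map_pow, FiniteField.pow_card_pow]

/-- fixed points of the `q`-Frobenius lie in the prime field image -/
lemma fixed_q {x : Fqt} (hx : x ^ (Fintype.card Fq) = x) :
    x ∈ Set.range (algebraMap Fq Fqt) := by
  classical
  set q := Fintype.card Fq with hq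
  have hq2 : 2 ≤ q := Fintype.one_lt_card
  by_contra hxR
  set R : Finset Fqt := Finset.univ.image (algebraMap Fq Fqt) with hR
  have hcardR : R.card = q := by
    rw [hR, Finset.card_image_of_injective _ (algebraMap Fq Fqt).injective, Finset.card_univ]
  have hxnotin : x ∉ R := by
    intro hmem
    rw [hR, Finset.mem_image] at hmem
    obtain ⟨μ, -, hμ⟩ := hmem
    exact hxR ⟨μ, hμ⟩
  set f : Polynomial Fqt := Polynomial.X ^ q - Polynomial.X with hf
  have hfne : f ≠ 0 := by
    intro h
    have : (Polynomial.X : Polynomial Fqt) ^ q = Polynomial.X := by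
      rwa [hf, sub_eq_zero] at h
    have := congrArg Polynomial.natDegree this
    rw [Polynomial.natDegree_X_pow, Polynomial.natDegree_X] at this
    omega
  have hdeg : f.natDegree ≤ q := by
    refine le_trans (Polynomial.natDegree_sub_le _ _) (max_le ?_ ?_)
    · rw [Polynomial.natDegree_X_pow]
    · rw [Polynomial.natDegree_X]; omega
  have hsub : insert x R ⊆ f.roots.toFinset := by
    intro y hy
    rw [Multiset.mem_toFinset, Polynomial.mem_roots hfne]
    rw [Finset.mem_insert] at hy
    have hyq : y ^ q = y := by
      rcases hy with rfl | hy
      · exact hx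
      · rw [hR, Finset.mem_image] at hy
        obtain ⟨μ, -, rfl⟩ := hy
        simpa using alg_pow_qpow (Fq := Fq) 1 μ
    simp [hf, Polynomial.IsRoot, hyq]
  have hcard := Finset.card_le_card hsub
  rw [Finset.card_insert_of_notMem hxnotin, hcardR] at hcard
  have : f.roots.toFinset.card ≤ q :=
    le_trans (Multiset.toFinset_card_le _) (le_trans (Polynomial.card_roots' f) hdeg)
  omega

end prelim
section gcdpart
variable {Fq Fqt : Type*} [Field Fq] [Fintype Fq] [Field Fqt] [Fintype Fqt]
  [Algebra Fq Fqt] [FiniteDimensional Fq Fqt]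

lemma pow_iter {x : Fqt} {d : ℕ} (h : x ^ (Fintype.card Fq ^ d) = x) (m : ℕ) :
    x ^ (Fintype.card Fq ^ (d * m)) = x := by
  induction m with
  | zero => simp
  | succ m ih =>
      have : Fintype.card Fq ^ (d * (m+1)) = Fintype.card Fq ^ (d * m) * Fintype.card Fq ^ d := by
        rw [← pow_add]; ring_nf
      rw [this, pow_mul, ih, h]

lemma fixed_qs {t s : ℕ} (ht : Module.finrank Fq Fqt = t) (ht1 : 1 ≤ t)
    (hst : Nat.gcd s t = 1) {x : Fqt} (hx : x ^ (Fintype.card Fq ^ s) = x) :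
    x ∈ Set.range (algebraMap Fq Fqt) := by
  have hcardFqt : Fintype.card Fqt = Fintype.card Fq ^ t := by
    rw [← ht]; exact card_eq_pow_finrank
  have hqt : x ^ (Fintype.card Fq ^ t) = x := by
    rw [← hcardFqt]; exact FiniteField.pow_card x
  apply fixed_q
  rcases eq_or_lt_of_le ht1 with h1 | h2
  · rw [← h1] at hqt; rwa [pow_one] at hqt
  · obtain ⟨m, -, hm⟩ := Nat.exists_mul_mod_eq_one_of_coprime hst h2
    have hsm : s * m = t * (s * m / t) + 1 := by
      conv_lhs => rw [← Nat.div_add_mod (s * m) t, hm]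
    have h1 : x ^ (Fintype.card Fq ^ (s * m)) = x := pow_iter hx m
    rw [hsm, pow_add, pow_one, pow_mul] at h1
    rwa [pow_iter hqt (s * m / t)] at h1

end gcdpart
section linmaps
variable {Fq Fqt : Type*} [Field Fq] [Fintype Fq] [Field Fqt] [Fintype Fqt]
  [Algebra Fq Fqt] [FiniteDimensional Fq Fqt]

noncomputable def Lmap (Fq : Type*) {Fqt : Type*} [Field Fq] [Fintype Fq] [Field Fqt]
    [Fintype Fqt] [Algebra Fq Fqt] (s k : ℕ) (a : ℕ → Fqt) : Fqt →ₗ[Fq] Fqt where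
  toFun x := ∑ i ∈ Finset.range (k+1), a i * x ^ ((Fintype.card Fq ^ s) ^ i)
  map_add' x y := by
    rw [← Finset.sum_add_distrib]
    refine Finset.sum_congr rfl fun i _ => ?_
    have h : ((Fintype.card Fq) ^ s) ^ i = Fintype.card Fq ^ (s * i) := by rw [pow_mul]
    rw [h, pow_qpow_add (s * i) x y]; ring
  map_smul' μ x := by
    simp only [RingHom.id_apply, Finset.smul_sum]
    refine Finset.sum_congr rfl fun i _ => ?_
    have h : ((Fintype.card Fq) ^ s) ^ i = Fintype.card Fq ^ (s * i) := by rw [pow_mul]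
    rw [Algebra.smul_def, Algebra.smul_def, h, mul_pow, alg_pow_qpow (s * i) μ]
    ring

lemma Lmap_apply (s k : ℕ) (a : ℕ → Fqt) (x : Fqt) :
    Lmap Fq s k a x = ∑ i ∈ Finset.range (k+1), a i * x ^ ((Fintype.card Fq ^ s) ^ i) := rfl

noncomputable def phimap (Fq : Type*) {Fqt : Type*} [Field Fq] [Fintype Fq] [Field Fqt]
    [Fintype Fqt] [Algebra Fq Fqt] (s : ℕ) (c : Fqt) : Fqt →ₗ[Fq] Fqt :=
  Lmap Fq s 1 (fun i => if i = 0 then -c else 1)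

lemma phimap_apply (s : ℕ) (c x : Fqt) :
    phimap Fq s c x = x ^ (Fintype.card Fq ^ s) - c * x := by
  rw [phimap, Lmap_apply, Finset.sum_range_succ, Finset.sum_range_one]
  norm_num
  ring

lemma Qpos (s : ℕ) : 1 ≤ Fintype.card Fq ^ s := Nat.one_le_pow _ _ Fintype.card_pos

lemma upow (s : ℕ) (u : Fqt) : u ^ (Fintype.card Fq ^ s - 1) * u = u ^ (Fintype.card Fq ^ s) := by
  rw [← pow_succ]
  congr 1
  have := Qpos (Fq := Fq) s
  omega

lemma ker_phi {s : ℕ} {u : Fqt} (hu : u ≠ 0)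
    (hfix : ∀ x : Fqt, x ^ (Fintype.card Fq ^ s) = x → x ∈ Set.range (algebraMap Fq Fqt)) :
    LinearMap.ker (phimap Fq s (u ^ (Fintype.card Fq ^ s - 1))) = Submodule.span Fq {u} := by
  set Q := Fintype.card Fq ^ s with hQ
  ext x
  rw [LinearMap.mem_ker, phimap_apply, Submodule.mem_span_singleton, sub_eq_zero]
  constructor
  · intro hx
    obtain ⟨y, hxy⟩ : ∃ y, x = y * u := ⟨x * u⁻¹, by field_simp⟩
    have hyQ : y ^ Q * u ^ Q = y * u ^ Q := by
      calc y ^ Q * u ^ Q = (y * u) ^ Q := by rw [mul_pow]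
        _ = x ^ Q := by rw [← hxy]
        _ = u ^ (Q - 1) * (y * u) := by rw [hx, hxy]
        _ = y * u ^ Q := by rw [← upow s u]; ring
    have hyfix : y ^ Q = y := mul_right_cancel₀ (pow_ne_zero _ hu) hyQ
    obtain ⟨μ, hμ⟩ := hfix y hyfix
    exact ⟨μ, by rw [Algebra.smul_def, hμ, ← hxy]⟩
  · rintro ⟨μ, rfl⟩
    rw [Algebra.smul_def, mul_pow, alg_pow_qpow s μ]
    rw [← upow s u]; ring

lemma finrank_le_map_add_ker (f : Fqt →ₗ[Fq] Fqt) (p : Submodule Fq Fqt) :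
    Module.finrank Fq p ≤
      Module.finrank Fq (p.map f) + Module.finrank Fq (LinearMap.ker f) := by
  have h := LinearMap.finrank_range_add_finrank_ker (f.domRestrict p)
  rw [LinearMap.range_domRestrict] at h
  rw [← h]
  have hg : ∀ x : LinearMap.ker (f.domRestrict p), f ((p.subtype).comp
      (Submodule.subtype _) x) = 0 := fun x => x.2
  set g : LinearMap.ker (f.domRestrict p) →ₗ[Fq] LinearMap.ker f :=
    LinearMap.codRestrict _ ((p.subtype).comp (Submodule.subtype _)) (fun x => hg x) with hgdef
  have hinj : Function.Injective g := by
    intro x y hxy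
    have h1 : ((g x : Fqt)) = ((g y : Fqt)) := by rw [hxy]
    exact Subtype.ext (Subtype.ext h1)
  have := LinearMap.finrank_le_finrank_of_injective hinj
  omega

lemma finrank_comap_le (f : Fqt →ₗ[Fq] Fqt) (W : Submodule Fq Fqt) :
    Module.finrank Fq (W.comap f) ≤
      Module.finrank Fq W + Module.finrank Fq (LinearMap.ker f) := by
  refine le_trans (finrank_le_map_add_ker f (W.comap f)) ?_
  have : Module.finrank Fq ((W.comap f).map f) ≤ Module.finrank Fq W :=
    Submodule.finrank_mono (Submodule.map_comap_le f W)
  omega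

end linmaps
section bco
variable {Fq Fqt : Type*} [Field Fq] [Fintype Fq] [Field Fqt] [Fintype Fqt]
  [Algebra Fq Fqt] [FiniteDimensional Fq Fqt]

def bAux {Fqt : Type*} [Field Fqt] (Q : ℕ) (c : Fqt) (a : ℕ → Fqt) (k : ℕ) : ℕ → Fqt
  | 0 => a (k+1)
  | m+1 => a (k-m) + bAux Q c a k m * c ^ Q ^ (k-m)

lemma btop {Q : ℕ} {c : Fqt} {a : ℕ → Fqt} {k : ℕ} : bAux Q c a k (k - k) = a (k+1) := by
  simp [Nat.sub_self, bAux]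

lemma brec {Q : ℕ} {c : Fqt} {a : ℕ → Fqt} {k j : ℕ} (hj : j < k) :
    bAux Q c a k (k - j) = a (j+1) + bAux Q c a k (k - (j+1)) * c ^ Q ^ (j+1) := by
  have h1 : k - j = (k - (j+1)) + 1 := by omega
  rw [h1]
  show a (k - (k - (j+1))) + _ = _
  have h2 : k - (k - (j+1)) = j + 1 := by omega
  rw [h2]

lemma key_identity (s k : ℕ) (a : ℕ → Fqt) (c x : Fqt) :
    Lmap Fq s (k+1) a x
      = Lmap Fq s k (fun j => bAux (Fintype.card Fq ^ s) c a k (k - j)) (phimap Fq s c x)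
        + (a 0 + (bAux (Fintype.card Fq ^ s) c a k (k - 0)) * c) * x := by
  set Q : ℕ := Fintype.card Fq ^ s with hQ
  set b : ℕ → Fqt := fun j => bAux Q c a k (k - j) with hb
  have step1 : ∀ j : ℕ, (phimap Fq s c x) ^ (Q ^ j)
      = x ^ (Q ^ (j+1)) - c ^ (Q ^ j) * x ^ (Q ^ j) := by
    intro j
    rw [phimap_apply]
    have hqe : Q ^ j = Fintype.card Fq ^ (s * j) := by rw [hQ, pow_mul]
    rw [hqe, pow_qpow_sub (s * j), mul_pow, ← hqe]
    congr 1
    rw [← pow_mul, ← pow_succ']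
  have hRHS : Lmap Fq s k b (phimap Fq s c x)
      = (∑ j ∈ Finset.range (k+1), b j * x ^ (Q ^ (j+1)))
        - ∑ j ∈ Finset.range (k+1), b j * c ^ (Q ^ j) * x ^ (Q ^ j) := by
    rw [Lmap_apply, ← Finset.sum_sub_distrib]
    refine Finset.sum_congr rfl fun j _ => ?_
    rw [← hQ, step1 j]; ring
  have hS2 : (∑ j ∈ Finset.range (k+1), b j * c ^ (Q ^ j) * x ^ (Q ^ j))
      = (∑ j ∈ Finset.range k, b (j+1) * c ^ (Q ^ (j+1)) * x ^ (Q ^ (j+1)))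
        + b 0 * c * x := by
    rw [Finset.sum_range_succ']
    congr 1
    rw [pow_zero, pow_one, pow_one]
  have hS1 : (∑ j ∈ Finset.range (k+1), b j * x ^ (Q ^ (j+1)))
      = (∑ j ∈ Finset.range k, b j * x ^ (Q ^ (j+1))) + a (k+1) * x ^ (Q ^ (k+1)) := by
    rw [Finset.sum_range_succ]
    simp only [hb]
    rw [btop]
  have hLHS : Lmap Fq s (k+1) a x
      = ((∑ i ∈ Finset.range k, a (i+1) * x ^ (Q ^ (i+1)))
          + a (k+1) * x ^ (Q ^ (k+1))) + a 0 * x := by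
    rw [Lmap_apply, Finset.sum_range_succ', ← hQ, Finset.sum_range_succ]
    congr 1
    rw [pow_zero, pow_one]
  have hmain : (∑ i ∈ Finset.range k, a (i+1) * x ^ (Q ^ (i+1)))
      = (∑ j ∈ Finset.range k, b j * x ^ (Q ^ (j+1)))
        - ∑ j ∈ Finset.range k, b (j+1) * c ^ (Q ^ (j+1)) * x ^ (Q ^ (j+1)) := by
    rw [← Finset.sum_sub_distrib]
    refine Finset.sum_congr rfl fun j hj => ?_
    rw [Finset.mem_range] at hj
    simp only [hb]
    rw [brec hj]
    ring
  rw [hLHS, hRHS, hS1, hS2, hmain]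
  ring

end bco
section mainlem
variable {Fq Fqt : Type*} [Field Fq] [Fintype Fq] [Field Fqt] [Fintype Fqt]
  [Algebra Fq Fqt] [FiniteDimensional Fq Fqt]

lemma bound_lemma (s : ℕ)
    (hfix : ∀ x : Fqt, x ^ (Fintype.card Fq ^ s) = x → x ∈ Set.range (algebraMap Fq Fqt)) :
    ∀ (k : ℕ) (a : ℕ → Fqt), a k ≠ 0 →
      Module.finrank Fq (LinearMap.ker (Lmap Fq s k a)) ≤ k := by
  intro k
  induction k with
  | zero =>
      intro a ha
      have hker : LinearMap.ker (Lmap Fq s 0 a) = ⊥ := by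
        ext x
        simp only [LinearMap.mem_ker, Lmap_apply, zero_add, Finset.sum_range_one, pow_zero,
          pow_one, Submodule.mem_bot]
        constructor
        · intro h
          rcases mul_eq_zero.mp h with h | h
          · exact absurd h ha
          · exact h
        · intro h; rw [h, mul_zero]
      rw [hker, finrank_bot]
  | succ k ih =>
      intro a ha
      by_cases hbot : LinearMap.ker (Lmap Fq s (k+1) a) = ⊥
      · rw [hbot, finrank_bot]; omega
      · obtain ⟨u, huK, hu⟩ := Submodule.exists_mem_ne_zero_of_ne_bot hbot
        set c : Fqt := u ^ (Fintype.card Fq ^ s - 1) with hc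
        set b : ℕ → Fqt := fun j => bAux (Fintype.card Fq ^ s) c a k (k - j) with hb
        have hbtop : b k ≠ 0 := by
          simp only [hb]; rw [btop]; exact ha
        have hphiu : phimap Fq s c u = 0 := by
          rw [phimap_apply, hc, upow, sub_self]
        have heval : (a 0 + b 0 * c) * u = 0 := by
          have h1 := key_identity (Fq := Fq) s k a c u
          have h0 : Lmap Fq s (k+1) a u = 0 := LinearMap.mem_ker.mp huK
          rw [h0, hphiu, map_zero, zero_add] at h1
          simp only [hb]
          exact h1.symm
        have hz : a 0 + b 0 * c = 0 := by
          rcases mul_eq_zero.mp heval with h | h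
          · exact h
          · exact absurd h hu
        have hcomp : LinearMap.ker (Lmap Fq s (k+1) a)
            = Submodule.comap (phimap Fq s c) (LinearMap.ker (Lmap Fq s k b)) := by
          ext x
          simp only [LinearMap.mem_ker, Submodule.mem_comap]
          rw [key_identity (Fq := Fq) s k a c x]
          simp only [← hb] at hz ⊢
          rw [hz, zero_mul, add_zero]
        rw [hcomp]
        refine le_trans (finrank_comap_le _ _) ?_
        have h1 := ih b hbtop
        have h2 : Module.finrank Fq (LinearMap.ker (phimap Fq s c)) = 1 := by
          rw [hc, ker_phi hu hfix]
          exact finrank_span_singleton hu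
        omega

lemma norm_lemma (s t : ℕ) (ht : Module.finrank Fq Fqt = t)
    (hfix : ∀ x : Fqt, x ^ (Fintype.card Fq ^ s) = x → x ∈ Set.range (algebraMap Fq Fqt)) :
    ∀ (k : ℕ) (a : ℕ → Fqt), a k = -1 →
      Module.finrank Fq (LinearMap.ker (Lmap Fq s k a)) = k →
      Algebra.norm Fq (a 0) = (-1 : Fq) ^ (t * (k + 1)) := by
  intro k
  induction k with
  | zero =>
      intro a ha _
      have h1 : (a 0 : Fqt) = algebraMap Fq Fqt (-1) := by rw [ha]; simp
      rw [h1, Algebra.norm_algebraMap, ht]; ring_nf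
  | succ k ih =>
      intro a ha hrk
      have hbot : LinearMap.ker (Lmap Fq s (k+1) a) ≠ ⊥ := by
        intro h; rw [h, finrank_bot] at hrk; omega
      obtain ⟨u, huK, hu⟩ := Submodule.exists_mem_ne_zero_of_ne_bot hbot
      set c : Fqt := u ^ (Fintype.card Fq ^ s - 1) with hc
      set b : ℕ → Fqt := fun j => bAux (Fintype.card Fq ^ s) c a k (k - j) with hb
      have hbtop : b k = -1 := by simp only [hb]; rw [btop]; exact ha
      have hbtop' : b k ≠ 0 := by rw [hbtop]; exact neg_ne_zero.mpr one_ne_zero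
      have hphiu : phimap Fq s c u = 0 := by
        rw [phimap_apply, hc, upow, sub_self]
      have heval : (a 0 + b 0 * c) * u = 0 := by
        have h1 := key_identity (Fq := Fq) s k a c u
        have h0 : Lmap Fq s (k+1) a u = 0 := LinearMap.mem_ker.mp huK
        rw [h0, hphiu, map_zero, zero_add] at h1
        simp only [hb]
        exact h1.symm
      have hz : a 0 + b 0 * c = 0 := by
        rcases mul_eq_zero.mp heval with h | h
        · exact h
        · exact absurd h hu
      have hcomp : LinearMap.ker (Lmap Fq s (k+1) a)
          = Submodule.comap (phimap Fq s c) (LinearMap.ker (Lmap Fq s k b)) := by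
        ext x
        simp only [LinearMap.mem_ker, Submodule.mem_comap]
        rw [key_identity (Fq := Fq) s k a c x]
        simp only [← hb] at hz ⊢
        rw [hz, zero_mul, add_zero]
      have hkerphi : Module.finrank Fq (LinearMap.ker (phimap Fq s c)) = 1 := by
        rw [hc, ker_phi hu hfix]
        exact finrank_span_singleton hu
      have hK1 : Module.finrank Fq (LinearMap.ker (Lmap Fq s k b)) = k := by
        have hle := bound_lemma s hfix k b hbtop'
        have hmapmono : Module.finrank Fq
              ((LinearMap.ker (Lmap Fq s (k+1) a)).map (phimap Fq s c))
            ≤ Module.finrank Fq (LinearMap.ker (Lmap Fq s k b)) := by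
          apply Submodule.finrank_mono
          rw [hcomp]
          exact Submodule.map_comap_le _ _
        have hge := finrank_le_map_add_ker (phimap Fq s c) (LinearMap.ker (Lmap Fq s (k+1) a))
        rw [hrk, hkerphi] at hge
        omega
      have hIH := ih b hbtop hK1
      have ha0 : a 0 = -(b 0 * c) := eq_neg_of_add_eq_zero_left hz
      have hnu : Algebra.norm Fq u ≠ 0 := by
        rw [Algebra.norm_ne_zero_iff]
        exact hu
      have hnc : (Algebra.norm Fq u) ^ (Fintype.card Fq ^ s - 1) = 1 := by
        obtain ⟨d, hd⟩ : (Fintype.card Fq - 1) ∣ (Fintype.card Fq ^ s - 1) := by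
          have := Nat.sub_dvd_pow_sub_pow (Fintype.card Fq) 1 s
          rwa [one_pow] at this
        rw [hd, pow_mul, FiniteField.pow_card_sub_one_eq_one _ hnu, one_pow]
      have hneg1 : Algebra.norm Fq (-1 : Fqt) = (-1 : Fq) ^ t := by
        have h1 : (-1 : Fqt) = algebraMap Fq Fqt (-1) := by simp
        rw [h1, Algebra.norm_algebraMap, ht]
      calc Algebra.norm Fq (a 0) = Algebra.norm Fq ((-1 : Fqt) * b 0 * c) := by
              rw [ha0]; ring_nf
        _ = Algebra.norm Fq (-1 : Fqt) * Algebra.norm Fq (b 0) * Algebra.norm Fq c := by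
              rw [map_mul, map_mul]
        _ = (-1 : Fq) ^ t * (-1 : Fq) ^ (t * (k + 1)) * 1 := by
              rw [hneg1, hIH, hc, map_pow, hnc]
        _ = (-1 : Fq) ^ (t * (k + 1 + 1)) := by
              rw [mul_one, ← pow_add]
              congr 1
              ring
  
end mainlem

/-- Norm criterion: if the linearized polynomial
`P(x) = a₀x + a₁x^{q^s} + ... + a_{k-1}x^{q^{s(k-1)}} − x^{q^{sk}}` (with `gcd(s,t) = 1`,
`k ≤ t`) splits completely over `F_{q^t}`, i.e. has exactly `q^k` roots, then
`N_{q^t/q}(a₀) = (−1)^{t(k+1)}`. -/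
theorem stmt_15 (Fq Fqt : Type*) [Field Fq] [Fintype Fq] [Field Fqt] [Fintype Fqt]
    [Algebra Fq Fqt] [FiniteDimensional Fq Fqt]
    (t s k : ℕ) (ht : Module.finrank Fq Fqt = t) (ht1 : 1 ≤ t)
    (hst : Nat.gcd s t = 1) (hk1 : 1 ≤ k) (hk : k ≤ t)
    (a : Fin k → Fqt)
    (hroots : Nat.card {x : Fqt |
        (∑ i : Fin k, a i * x ^ (Fintype.card Fq ^ (s * i.val)))
          - x ^ (Fintype.card Fq ^ (s * k)) = 0} = Fintype.card Fq ^ k) :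
    Algebra.norm Fq (a ⟨0, hk1⟩) = (-1) ^ (t * (k + 1)) := by
  classical
  set a' : ℕ → Fqt := fun i => if h : i < k then a ⟨i, h⟩ else -1 with ha'
  have hfix : ∀ x : Fqt, x ^ (Fintype.card Fq ^ s) = x →
      x ∈ Set.range (algebraMap Fq Fqt) := fun x hx => fixed_qs ht ht1 hst hx
  have ha'k : a' k = -1 := dif_neg (lt_irrefl k)
  have happly : ∀ x : Fqt, Lmap Fq s k a' x
      = (∑ i : Fin k, a i * x ^ (Fintype.card Fq ^ (s * i.val)))
        - x ^ (Fintype.card Fq ^ (s * k)) := by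
    intro x
    rw [Lmap_apply, Finset.sum_range_succ, ha'k]
    have h2 : ∑ i ∈ Finset.range k, a' i * x ^ ((Fintype.card Fq ^ s) ^ i)
        = ∑ i : Fin k, a i * x ^ (Fintype.card Fq ^ (s * i.val)) := by
      rw [← Fin.sum_univ_eq_sum_range (fun i => a' i * x ^ ((Fintype.card Fq ^ s) ^ i)) k]
      refine Finset.sum_congr rfl fun i _ => ?_
      have h3 : a' i.val = a i := by
        simp only [ha']
        rw [dif_pos i.isLt]
      rw [h3, ← pow_mul]
    rw [h2, ← pow_mul]
    ring
  have hsets : {x : Fqt |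
      (∑ i : Fin k, a i * x ^ (Fintype.card Fq ^ (s * i.val)))
        - x ^ (Fintype.card Fq ^ (s * k)) = 0}
      = ((LinearMap.ker (Lmap Fq s k a') : Submodule Fq Fqt) : Set Fqt) := by
    ext x
    simp only [Set.mem_setOf_eq, SetLike.mem_coe, LinearMap.mem_ker, happly x]
  rw [hsets] at hroots
  have hcard : Nat.card (LinearMap.ker (Lmap Fq s k a'))
      = Fintype.card Fq ^ Module.finrank Fq (LinearMap.ker (Lmap Fq s k a')) := by
    haveI : Fintype (LinearMap.ker (Lmap Fq s k a')) := Fintype.ofFinite _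
    rw [Nat.card_eq_fintype_card]
    exact card_eq_pow_finrank
  have hroots' : Nat.card (LinearMap.ker (Lmap Fq s k a')) = Fintype.card Fq ^ k := hroots
  have hrank : Module.finrank Fq (LinearMap.ker (Lmap Fq s k a')) = k := by
    exact Nat.pow_right_injective (Fintype.one_lt_card (α := Fq))
      (hcard.symm.trans hroots')
  have hres := norm_lemma s t ht hfix k a' ha'k hrank
  have h0 : a' 0 = a ⟨0, hk1⟩ := dif_pos hk1
  rwa [h0] at hres
end

section
/- Let n = 2t, gcd(s,t) = 1, ξ ∈ F_{q^n} \ F_{q^t} with ξ² = Aξ + B for A, B ∈ F_{q^t}, and suppose N_{q^t/q}(B) ≠ (−1)^t. Then for all α₀, α₁ ∈ F_{q^t} with α₁ ≠ 0, the F_q-linear map G(x) = α₀^{q^s}x^{q^s} + α₁^{q^s}B^{q^s}x^{q^{2s}} − (α₀ + α₁A)x^{q^s} − α₁x on F_{q^t} has kernel of F_q-dimension at most 1. -/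
open Polynomial in
/-- Elements of `Fqt` fixed by the `q`-power map lie in the image of `Fq`. -/
lemma stmt_16_aux_fixed (Fq Fqt : Type*) [Field Fq] [Fintype Fq] [Field Fqt] [Algebra Fq Fqt]
    (z : Fqt) (hz : z ^ Fintype.card Fq = z) : ∃ l : Fq, algebraMap Fq Fqt l = z := by
  classical
  set q := Fintype.card Fq with hq
  have hq1 : 1 < q := Fintype.one_lt_card
  set P : Polynomial Fqt := X ^ q - X with hP
  have hPne : P ≠ 0 := FiniteField.X_pow_card_sub_X_ne_zero Fqt hq1
  have hdeg : P.natDegree = q := FiniteField.X_pow_card_sub_X_natDegree_eq Fqt hq1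
  have hmem : ∀ w : Fqt, w ^ q = w → w ∈ P.roots.toFinset := by
    intro w hw
    rw [Multiset.mem_toFinset, Polynomial.mem_roots hPne]
    simp [hP, Polynomial.IsRoot, hw]
  have hsub : Finset.univ.image (algebraMap Fq Fqt) ⊆ P.roots.toFinset := by
    intro w hw
    obtain ⟨l, -, rfl⟩ := Finset.mem_image.mp hw
    refine hmem _ ?_
    rw [← map_pow, FiniteField.pow_card]
  have hcard : P.roots.toFinset.card ≤ (Finset.univ.image (algebraMap Fq Fqt)).card := by
    rw [Finset.card_image_of_injective _ (algebraMap Fq Fqt).injective, Finset.card_univ]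
    calc P.roots.toFinset.card ≤ Multiset.card P.roots := Multiset.toFinset_card_le _
      _ ≤ P.natDegree := Polynomial.card_roots' P
      _ = q := hdeg
  have heq := Finset.eq_of_subset_of_card_le hsub hcard
  have hz' := hmem z hz
  rw [← heq] at hz'
  obtain ⟨l, -, hl⟩ := Finset.mem_image.mp hz'
  exact ⟨l, hl⟩

/-- If `ξ² = Aξ + B` with `N_{q^t/q}(B) ≠ (−1)^t`, then for all `α₀, α₁ ∈ F_{q^t}` with
`α₁ ≠ 0`, the kernel of
`G(x) = α₀^{q^s}x^{q^s} + α₁^{q^s}B^{q^s}x^{q^{2s}} − (α₀ + α₁A)x^{q^s} − α₁x`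
on `F_{q^t}` has `F_q`-dimension at most `1`. -/
theorem stmt_16 (Fq Fqt Fqn : Type*) [Field Fq] [Fintype Fq] [Field Fqt] [Field Fqn]
    [Algebra Fq Fqt] [Algebra Fqt Fqn] [Algebra Fq Fqn] [IsScalarTower Fq Fqt Fqn]
    [FiniteDimensional Fq Fqt] [FiniteDimensional Fqt Fqn]
    (t s : ℕ) (ht : Module.finrank Fq Fqt = t) (h2 : Module.finrank Fqt Fqn = 2)
    (hst : Nat.gcd s t = 1)
    (ξ : Fqn) (hξ : ξ ∉ Set.range (algebraMap Fqt Fqn))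
    (A B : Fqt) (hξ2 : ξ ^ 2 = algebraMap Fqt Fqn A * ξ + algebraMap Fqt Fqn B)
    (hB : Algebra.norm Fq B ≠ (-1) ^ t)
    (α₀ α₁ : Fqt) (hα₁ : α₁ ≠ 0)
    (G : Fqt →ₗ[Fq] Fqt)
    (hG : ∀ x, G x = α₀ ^ (Fintype.card Fq ^ s) * x ^ (Fintype.card Fq ^ s)
        + α₁ ^ (Fintype.card Fq ^ s) * B ^ (Fintype.card Fq ^ s) * x ^ (Fintype.card Fq ^ (2 * s))
        - (α₀ + α₁ * A) * x ^ (Fintype.card Fq ^ s) - α₁ * x) :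
    Module.finrank Fq ↥(LinearMap.ker G) ≤ 1 := by
  classical
  by_contra hcon
  push_neg at hcon
  set q := Fintype.card Fq with hqδ
  set Q := q ^ s with hQδ
  -- basic numerology
  have hq1 : 1 < q := Fintype.one_lt_card
  have hker_le : Module.finrank Fq ↥(LinearMap.ker G) ≤ Module.finrank Fq Fqt :=
    Submodule.finrank_le _
  have ht2 : 2 ≤ t := by omega
  have hs1 : 1 ≤ s := by
    rcases Nat.eq_zero_or_pos s with h | h
    · subst h; simp [Nat.gcd] at hst; omega
    · exact h
  -- B ≠ 0
  have hBne : B ≠ 0 := by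
    rintro rfl
    rw [map_zero, add_zero, pow_two] at hξ2
    rcases mul_eq_zero.mp (by linear_combination hξ2 : ξ * (ξ - algebraMap Fqt Fqn A) = 0)
      with h | h
    · exact hξ ⟨0, by simp [h]⟩
    · exact hξ ⟨A, by linear_combination -h⟩
  -- two independent elements of the kernel
  obtain ⟨v, hv⟩ := exists_linearIndependent_of_le_finrank (R := Fq)
    (M := ↥(LinearMap.ker G)) hcon
  have hv' : LinearIndependent Fq ((LinearMap.ker G).subtype ∘ v) :=
    hv.map' (LinearMap.ker G).subtype (Submodule.ker_subtype _)
  set x : Fqt := ((LinearMap.ker G).subtype ∘ v) 0 with hxδ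
  set y : Fqt := ((LinearMap.ker G).subtype ∘ v) 1 with hyδ
  have hxker : G x = 0 := (v 0).2
  have hyker : G y = 0 := (v 1).2
  have hxne : x ≠ 0 := hv'.ne_zero 0
  have hnotsmul : ∀ l : Fq, algebraMap Fq Fqt l * x ≠ y := by
    intro l hl
    have hli := Fintype.linearIndependent_iff.mp hv' ![l, -1]
    have hsum : (∑ i, (![l, -1] : Fin 2 → Fq) i • ((LinearMap.ker G).subtype ∘ v) i) = 0 := by
      rw [Fin.sum_univ_two]
      simp only [Matrix.cons_val_zero, Matrix.cons_val_one, Matrix.head_cons]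
      rw [Algebra.smul_def, Algebra.smul_def]
      simp only [map_neg, map_one]
      rw [← hxδ, ← hyδ, hl]
      ring
    have h1 := hli hsum 1
    simp at h1
  -- characteristic and Frobenius additivity
  haveI : CharP Fq (ringChar Fq) := ringChar.charP Fq
  haveI hpfact : Fact (ringChar Fq).Prime := ⟨CharP.char_is_prime Fq (ringChar Fq)⟩
  haveI : CharP Fqt (ringChar Fq) :=
    charP_of_injective_algebraMap (algebraMap Fq Fqt).injective (ringChar Fq)
  obtain ⟨k, -, hcard⟩ := FiniteField.card Fq (ringChar Fq)
  have hsubpow : ∀ (u w : Fqt) (n : ℕ), (u - w) ^ (q ^ n) = u ^ (q ^ n) - w ^ (q ^ n) := by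
    intro u w n
    have hqp : q ^ n = (ringChar Fq) ^ ((k : ℕ) * n) := by
      rw [hqδ, hcard, ← pow_mul]
    rw [hqp]
    exact sub_pow_char_pow (p := ringChar Fq) u w ((k : ℕ) * n)
  -- the kernel equation as a skew recurrence
  have hrec : ∀ z : Fqt, G z = 0 →
      (α₁ ^ Q * B ^ Q) * (z ^ Q) ^ Q + (α₀ ^ Q - (α₀ + α₁ * A)) * z ^ Q + (-α₁) * z = 0 := by
    intro z hz
    have h := (hG z).symm.trans hz
    have h2s : q ^ (2 * s) = Q * Q := by
      rw [hQδ, two_mul, pow_add]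
    rw [h2s, pow_mul] at h
    linear_combination h
  -- key identity for the Casoratian
  have key : ∀ (a b c xv yv xq yq xqq yqq : Fqt),
      a * xqq + b * xq + c * xv = 0 → a * yqq + b * yq + c * yv = 0 →
      a * (xq * yqq - yq * xqq) = c * (xv * yq - yv * xq) := by
    intro a b c xv yv xq yq xqq yqq hx hy
    linear_combination xq * hy - yq * hx
  set W := x * y ^ Q - y * x ^ Q with hWδ
  have hWQ : W ^ Q = x ^ Q * (y ^ Q) ^ Q - y ^ Q * (x ^ Q) ^ Q := by
    have h := hsubpow (x * y ^ Q) (y * x ^ Q) s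
    rw [← hQδ] at h
    rw [hWδ, h, mul_pow, mul_pow]
  have hkey : (α₁ ^ Q * B ^ Q) * W ^ Q = (-α₁) * W := by
    rw [hWQ, hWδ]
    exact key _ _ _ x y (x ^ Q) (y ^ Q) ((x ^ Q) ^ Q) ((y ^ Q) ^ Q)
      (hrec x hxker) (hrec y hyker)
  by_cases hW : W = 0
  · -- y/x lies in the fixed field of the q^s-Frobenius, hence in Fq
    haveI : Finite Fqt := Module.finite_of_finite Fq
    haveI : Fintype Fqt := Fintype.ofFinite Fqt
    have hxQ : x ^ Q ≠ 0 := pow_ne_zero _ hxne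
    set z := y / x with hzδ
    have hzQ : z ^ Q = z := by
      rw [hzδ, div_pow, div_eq_div_iff hxQ hxne]
      rw [hWδ] at hW
      linear_combination hW
    have hcardt : Fintype.card Fqt = q ^ t := by
      rw [hqδ, Module.card_eq_pow_finrank (K := Fq) (V := Fqt), ht]
    have hzT : z ^ (q ^ t) = z := by
      rw [← hcardt]; exact FiniteField.pow_card z
    have hiter : ∀ (w : Fqt) (e m : ℕ), w ^ (q ^ e) = w → w ^ ((q ^ e) ^ m) = w := by
      intro w e m hw
      induction m with
      | zero => simp
      | succ m ih => rw [pow_succ, pow_mul, ih, hw]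
    obtain ⟨m, -, hm⟩ := Nat.exists_mul_mod_eq_one_of_coprime hst (by omega)
    have hb := Nat.div_add_mod (s * m) t
    rw [hm] at hb
    have h1 : z ^ (q ^ (s * m)) = z := by
      rw [pow_mul q s m]
      exact hiter z s m (by rw [← hQδ]; exact hzQ)
    have h3 : z ^ (q ^ (t * (s * m / t))) = z := by
      rw [pow_mul q t]
      exact hiter z t _ hzT
    have h4 : z ^ (q ^ (s * m)) = z ^ q := by
      conv_lhs => rw [← hb]
      rw [pow_succ, pow_mul, h3]
    have hzq : z ^ q = z := by rw [← h4, h1]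
    obtain ⟨l, hl⟩ := stmt_16_aux_fixed Fq Fqt z hzq
    refine hnotsmul l ?_
    rw [hl, hzδ, div_mul_cancel₀ _ hxne]
  · -- take norms in the Casoratian relation
    have hnormne : ∀ w : Fqt, w ≠ 0 → Algebra.norm Fq w ≠ 0 := by
      intro w hw
      have h1 : Algebra.norm Fq w * Algebra.norm Fq w⁻¹ = 1 := by
        rw [← map_mul, mul_inv_cancel₀ hw, map_one]
      exact left_ne_zero_of_mul_eq_one h1
    have hN := congrArg (Algebra.norm Fq) hkey
    rw [map_mul, map_mul, map_pow] at hN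
    have hfix : ∀ w : Fq, w ^ Q = w := by
      intro w
      rw [hQδ, hqδ]
      exact FiniteField.pow_card_pow s w
    simp only [map_mul, map_pow] at hN
    simp only [hfix] at hN
    have hN2 : Algebra.norm Fq α₁ * Algebra.norm Fq B = Algebra.norm Fq (-α₁) :=
      mul_right_cancel₀ (hnormne W hW) (by linear_combination hN)
    have hNc : Algebra.norm Fq (-α₁) = (-1) ^ t * Algebra.norm Fq α₁ := by
      rw [neg_eq_neg_one_mul, map_mul]
      congr 1
      have hneg : (-1 : Fqt) = algebraMap Fq Fqt (-1) := by rw [map_neg, map_one]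
      rw [hneg, Algebra.norm_algebraMap, ht]
    apply hB
    have hfin : Algebra.norm Fq α₁ * Algebra.norm Fq B
        = (-1) ^ t * Algebra.norm Fq α₁ := by
      rw [hN2, hNc]
    exact mul_left_cancel₀ (hnormne α₁ hα₁) (by linear_combination hfin)
end

section
/- Let n = 2t, Tr = Tr_{q^t/q}, ξ ∈ F_{q^n} \ F_{q^t} with ξ² = Aξ + B, and let α₀, α₁ ∈ F_{q^t}. Every element β in the kernel of G(x) = Tr(α₀x) + Tr(α₁B)·Tr(x) − (α₀ + α₁A)·Tr(x) − α₁x with α₁ ≠ 0 satisfies α₁β ∈ Im(x ↦ Tr(α₀x)) + ε·F_q where ε = Tr(α₁B) − α₀ − α₁A; consequently dim_{F_q}(ker G) ≤ 2. -/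
/-- For `G(x) = Tr(α₀x) + Tr(α₁B)·Tr(x) − (α₀ + α₁A)·Tr(x) − α₁x` with `α₁ ≠ 0`: every
`β ∈ ker G` satisfies `α₁β ∈ Im(x ↦ Tr(α₀x)) + ε·F_q` with `ε = Tr(α₁B) − α₀ − α₁A`;
consequently `dim_{F_q}(ker G) ≤ 2`. -/
theorem stmt_19 (Fq Fqt : Type*) [Field Fq] [Fintype Fq] [Field Fqt]
    [Algebra Fq Fqt] [FiniteDimensional Fq Fqt]
    (t : ℕ) (ht : Module.finrank Fq Fqt = t)
    (A B : Fqt) (α₀ α₁ : Fqt) (hα₁ : α₁ ≠ 0)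
    (G : Fqt →ₗ[Fq] Fqt)
    (hG : ∀ x, G x = algebraMap Fq Fqt (Algebra.trace Fq Fqt (α₀ * x))
        + algebraMap Fq Fqt (Algebra.trace Fq Fqt (α₁ * B))
            * algebraMap Fq Fqt (Algebra.trace Fq Fqt x)
        - (α₀ + α₁ * A) * algebraMap Fq Fqt (Algebra.trace Fq Fqt x)
        - α₁ * x) :
    (∀ β, G β = 0 → ∃ (y : Fqt) (c : Fq),
      α₁ * β = algebraMap Fq Fqt (Algebra.trace Fq Fqt (α₀ * y))
        + (algebraMap Fq Fqt (Algebra.trace Fq Fqt (α₁ * B)) - α₀ - α₁ * A)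
            * algebraMap Fq Fqt c) ∧
    Module.finrank Fq ↥(LinearMap.ker G) ≤ 2 := by
  have key : ∀ β, G β = 0 →
      α₁ * β = algebraMap Fq Fqt (Algebra.trace Fq Fqt (α₀ * β))
        + (algebraMap Fq Fqt (Algebra.trace Fq Fqt (α₁ * B)) - α₀ - α₁ * A)
            * algebraMap Fq Fqt (Algebra.trace Fq Fqt β) := by
    intro β hβ
    have := hG β
    rw [hβ] at this
    linear_combination this
  constructor
  · intro β hβ
    exact ⟨β, Algebra.trace Fq Fqt β, key β hβ⟩
  · -- injection from ker G into Fq × Fq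
    set f : Fqt →ₗ[Fq] Fq × Fq :=
      LinearMap.prod ((Algebra.trace Fq Fqt).comp (LinearMap.mulLeft Fq α₀))
        (Algebra.trace Fq Fqt) with hf
    have hinj : Function.Injective (f.comp (LinearMap.ker G).subtype) := by
      rw [← LinearMap.ker_eq_bot, LinearMap.ker_eq_bot']
      intro ⟨β, hβ⟩ h
      simp only [LinearMap.comp_apply, LinearMap.prod_apply, Submodule.subtype_apply,
        Function.prod, hf, LinearMap.mulLeft_apply, Prod.ext_iff, Prod.fst_zero, Prod.snd_zero] at h
      have hk := key β (LinearMap.mem_ker.mp hβ)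
      rw [h.1, h.2] at hk
      simp only [map_zero, mul_zero, add_zero, zero_add] at hk
      have : β = 0 := by
        rcases mul_eq_zero.mp hk with h' | h'
        · exact absurd h' hα₁
        · exact h'
      exact Subtype.ext this
    have h2 : Module.finrank Fq (Fq × Fq) = 2 := by
      simp [Module.finrank_prod]
    calc Module.finrank Fq ↥(LinearMap.ker G)
        ≤ Module.finrank Fq (Fq × Fq) :=
          LinearMap.finrank_le_finrank_of_injective hinj
      _ = 2 := h2
end
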